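/- arXiv:1707.01706 — 2 statements merged into one kernel-verified Lean document; each statement's English description precedes it below -/
import Mathlib

section
/- Let (a_j)_{j≥1} be a positive nondecreasing sequence with a_j → ∞, (s_j)_{j≥1} a positive sequence with s_j → 0, Q > 0, σ > 0, σ_j := 1/s_j. Then the best truncation-estimator squared risk over the ellipsoid is at most twice the supremum of J over the squared positive ellipsoid: inf over finite subsets P ⊆ {1,2,…} of ( sup_{r ∈ Θ₊²(a,Q)} ∑_{i ∉ P} r_i + σ² ∑_{i ∈ P} σ_i² ) ≤ 2 · sup_{r ∈ Θ₊²(a,Q)} J(r). -/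
open Filter
open scoped Classical

/-!
Write `c i = σ² / s i²` and `T n = ∑_{i<n} a i² c i`. Since `c i → ∞`, there is an `N` with
`T N ≤ Q² < T (N+1)`. Truncating at `P = {0, …, N-1}` costs at most `Q² / a N² + ∑_{i<N} c i`,
because monotonicity of `a` bounds the tail `∑_{i≥N} r i` by `Q² / a N²`. The water-filling
sequence, equal to `c i` below `N` and spending the remaining budget `Q² - T N` on coordinate `N`,
lies in the ellipsoid and has `J ≥ ∑_{i<N} c i` as well as `J ≥ Q² / a N²` (as
`T N ≤ a N² ∑_{i<N} c i`); so twice `sup J` dominates that risk.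

Coordinates are indexed from `0`: index `i` is coordinate `i + 1` of the paper.
-/

open Finset

theorem tsum_le_div_of_mul_le {ι : Type*} {f g : ι → ℝ} {c B : ℝ} (hc : 0 < c)
    (hf : ∀ i, 0 ≤ f i) (hfg : ∀ i, c * f i ≤ g i) (hg : Summable g) (hgB : ∑' i, g i ≤ B) :
    ∑' i, f i ≤ B / c := by
  have hle : ∀ i, f i ≤ g i / c := fun i => (le_div_iff₀' hc).2 (hfg i)
  calc ∑' i, f i ≤ ∑' i, g i / c :=
        ((hg.div_const c).of_nonneg_of_le hf hle).tsum_le_tsum hle (hg.div_const c)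
    _ = (∑' i, g i) / c := tsum_div_const
    _ ≤ B / c := by gcongr

theorem tendsto_const_div_sq_atTop {ι : Type*} {l : Filter ι} {s : ι → ℝ} (hs_pos : ∀ j, 0 < s j)
    (hs_zero : Tendsto s l (nhds 0)) {b : ℝ} (hb : 0 < b) :
    Tendsto (fun j => b / s j ^ 2) l atTop := by
  have hsq : Tendsto (fun j => s j ^ 2) l (nhdsWithin 0 (Set.Ioi 0)) :=
    tendsto_nhdsWithin_of_tendsto_nhds_of_eventually_within _ (by simpa using hs_zero.pow 2)
      (Eventually.of_forall fun j => pow_pos (hs_pos j) 2)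
  simpa only [div_eq_mul_inv, Pi.inv_apply] using hsq.inv_tendsto_nhdsGT_zero.const_mul_atTop hb

theorem exists_le_lt_succ {T : ℕ → ℝ} {x : ℝ} {n : ℕ} (hn : x < T n) (h0 : T 0 ≤ x) :
    ∃ N, T N ≤ x ∧ x < T (N + 1) := by
  induction n with
  | zero => exact absurd h0 (not_le.2 hn)
  | succ n ih =>
    by_cases h : T n ≤ x
    · exact ⟨n, h, hn⟩
    · exact ih (not_le.1 h)

def posEllipsoid (a : ℕ → ℝ) (Q : ℝ) : Set (ℕ → ℝ) :=
  {r | (∀ j, 0 ≤ r j) ∧ (Summable fun j => a j ^ 2 * r j) ∧ ∑' j, a j ^ 2 * r j ≤ Q ^ 2}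

section Ellipsoid

variable {a c : ℕ → ℝ} {Q : ℝ}

theorem zero_mem_posEllipsoid : (0 : ℕ → ℝ) ∈ posEllipsoid a Q :=
  ⟨fun _ => le_rfl, by simp, by simpa using sq_nonneg Q⟩

theorem sq_le_sq_of_monotone
    (ha_pos : ∀ j, 0 < a j) (ha_mono : Monotone a) {i j : ℕ} (hij : i ≤ j) : a i ^ 2 ≤ a j ^ 2 :=
  pow_le_pow_left₀ (ha_pos i).le (ha_mono hij) 2

theorem tsum_tail_le_of_mem_posEllipsoid
    (ha_pos : ∀ j, 0 < a j) (ha_mono : Monotone a) (N : ℕ) {r : ℕ → ℝ} (hr : r ∈ posEllipsoid a Q) :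
    ∑' i, (if i ∈ range N then 0 else r i) ≤ Q ^ 2 / a N ^ 2 := by
  refine tsum_le_div_of_mul_le (pow_pos (ha_pos N) 2) (fun i => ?_) (fun i => ?_) hr.2.1 hr.2.2
  · split_ifs
    exacts [le_rfl, hr.1 i]
  · split_ifs with hi
    · simpa using mul_nonneg (sq_nonneg (a i)) (hr.1 i)
    · exact mul_le_mul_of_nonneg_right
        (sq_le_sq_of_monotone ha_pos ha_mono (not_lt.1 (mt mem_range.2 hi))) (hr.1 i)

theorem tsum_min_le_of_mem_posEllipsoid
    (ha_pos : ∀ j, 0 < a j) (ha_mono : Monotone a) (hc : ∀ j, 0 ≤ c j) {r : ℕ → ℝ}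
    (hr : r ∈ posEllipsoid a Q) : ∑' j, min (r j) (c j) ≤ Q ^ 2 / a 0 ^ 2 :=
  tsum_le_div_of_mul_le (pow_pos (ha_pos 0) 2) (fun j => le_min (hr.1 j) (hc j))
    (fun j => (mul_le_mul_of_nonneg_left (min_le_left _ _) (sq_nonneg _)).trans
      (mul_le_mul_of_nonneg_right (sq_le_sq_of_monotone ha_pos ha_mono (Nat.zero_le j)) (hr.1 j)))
    hr.2.1 hr.2.2

theorem sSup_truncationRisk_nonneg (P : Finset ℕ) {K : ℝ} (hK : 0 ≤ K) :
    0 ≤ sSup {t | ∃ r ∈ posEllipsoid a Q, t = ∑' i, (if i ∈ P then 0 else r i) + K} :=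
  Real.sSup_nonneg <| by
    rintro _ ⟨r, hr, rfl⟩
    exact add_nonneg (tsum_nonneg fun i => by split_ifs; exacts [le_rfl, hr.1 i]) hK

theorem sSup_truncationRisk_range_le
    (ha_pos : ∀ j, 0 < a j) (ha_mono : Monotone a) (N : ℕ) (K : ℝ) :
    sSup {t | ∃ r ∈ posEllipsoid a Q, t = ∑' i, (if i ∈ range N then 0 else r i) + K}
      ≤ Q ^ 2 / a N ^ 2 + K :=
  csSup_le ⟨_, 0, zero_mem_posEllipsoid, rfl⟩ <| by
    rintro _ ⟨r, hr, rfl⟩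
    gcongr
    exact tsum_tail_le_of_mem_posEllipsoid ha_pos ha_mono N hr

theorem le_sSup_tsum_min
    (ha_pos : ∀ j, 0 < a j) (ha_mono : Monotone a) (hc : ∀ j, 0 ≤ c j) {r : ℕ → ℝ}
    (hr : r ∈ posEllipsoid a Q) :
    ∑' j, min (r j) (c j) ≤ sSup {t | ∃ r ∈ posEllipsoid a Q, t = ∑' j, min (r j) (c j)} :=
  le_csSup ⟨Q ^ 2 / a 0 ^ 2, by
    rintro _ ⟨r, hr, rfl⟩
    exact tsum_min_le_of_mem_posEllipsoid ha_pos ha_mono hc hr⟩ ⟨r, hr, rfl⟩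

theorem exists_lt_sum_range
    (ha_pos : ∀ j, 0 < a j) (ha_mono : Monotone a) (hc : ∀ j, 0 ≤ c j)
    (hc_top : Tendsto c atTop atTop) (x : ℝ) :
    ∃ n, x < ∑ j ∈ range n, a j ^ 2 * c j := by
  obtain ⟨n, hn⟩ :=
    ((hc_top.const_mul_atTop (pow_pos (ha_pos 0) 2)).eventually_gt_atTop x).exists
  refine ⟨n + 1, hn.trans_le ?_⟩
  calc a 0 ^ 2 * c n ≤ a n ^ 2 * c n :=
        mul_le_mul_of_nonneg_right (sq_le_sq_of_monotone ha_pos ha_mono (Nat.zero_le n)) (hc n)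
    _ ≤ ∑ j ∈ range (n + 1), a j ^ 2 * c j :=
        single_le_sum (fun j _ => mul_nonneg (sq_nonneg _) (hc j)) (self_mem_range_succ n)

end Ellipsoid

noncomputable def waterFill (a c : ℕ → ℝ) (Q : ℝ) (N i : ℕ) : ℝ :=
  if i < N then c i else if i = N then (Q ^ 2 - ∑ j ∈ range N, a j ^ 2 * c j) / a N ^ 2 else 0

section WaterFill

variable {a c : ℕ → ℝ} {Q : ℝ} {N : ℕ}

theorem waterFill_eq_zero {i : ℕ} (hi : i ∉ range (N + 1)) : waterFill a c Q N i = 0 := by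
  rw [mem_range] at hi
  simp only [waterFill, if_neg (by omega : ¬i < N), if_neg (by omega : i ≠ N)]

theorem tsum_waterFill {g : ℕ → ℝ → ℝ} (hg : ∀ i, g i 0 = 0) :
    ∑' i, g i (waterFill a c Q N i) = ∑ i ∈ range N, g i (c i)
      + g N ((Q ^ 2 - ∑ j ∈ range N, a j ^ 2 * c j) / a N ^ 2) := by
  rw [tsum_eq_sum fun i hi => by rw [waterFill_eq_zero hi, hg], sum_range_succ]
  congr 1
  · exact sum_congr rfl fun i hi => by simp [waterFill, mem_range.1 hi]
  · simp [waterFill]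

theorem waterFill_mem_posEllipsoid (hc : ∀ j, 0 ≤ c j) (haN : a N ≠ 0)
    (hT : ∑ j ∈ range N, a j ^ 2 * c j ≤ Q ^ 2) : waterFill a c Q N ∈ posEllipsoid a Q := by
  refine ⟨fun i => ?_, summable_of_ne_finset_zero (s := range (N + 1)) fun i hi => ?_, ?_⟩
  · unfold waterFill
    split_ifs
    exacts [hc i, div_nonneg (sub_nonneg.2 hT) (sq_nonneg _), le_rfl]
  · rw [waterFill_eq_zero hi, mul_zero]
  · rw [tsum_waterFill (g := fun i x => a i ^ 2 * x) fun i => mul_zero (a i ^ 2),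
      mul_div_cancel₀ _ (pow_ne_zero 2 haN)]
    simp

theorem tsum_min_waterFill (hc : ∀ j, 0 ≤ c j) (haN : 0 < a N)
    (hT : Q ^ 2 < ∑ j ∈ range (N + 1), a j ^ 2 * c j) :
    ∑' i, min (waterFill a c Q N i) (c i) = ∑ i ∈ range N, c i
      + (Q ^ 2 - ∑ j ∈ range N, a j ^ 2 * c j) / a N ^ 2 := by
  rw [tsum_waterFill (g := fun i x => min x (c i)) fun i => min_eq_left (hc i)]
  simp only [min_self]
  congr 1
  refine min_eq_left ((div_le_iff₀ (pow_pos haN 2)).2 ?_)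
  rw [sum_range_succ] at hT
  linarith

theorem sq_div_add_sum_le_two_mul_tsum_min_waterFill (ha_pos : ∀ j, 0 < a j)
    (ha_mono : Monotone a) (hc : ∀ j, 0 ≤ c j) (hT : ∑ j ∈ range N, a j ^ 2 * c j ≤ Q ^ 2)
    (hT' : Q ^ 2 < ∑ j ∈ range (N + 1), a j ^ 2 * c j) :
    Q ^ 2 / a N ^ 2 + ∑ i ∈ range N, c i ≤ 2 * ∑' i, min (waterFill a c Q N i) (c i) := by
  have haN := pow_pos (ha_pos N) 2
  rw [tsum_min_waterFill hc (ha_pos N) hT']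
  have hlevel : 0 ≤ (Q ^ 2 - ∑ j ∈ range N, a j ^ 2 * c j) / a N ^ 2 :=
    div_nonneg (sub_nonneg.2 hT) haN.le
  have hT_le : (∑ j ∈ range N, a j ^ 2 * c j) / a N ^ 2 ≤ ∑ i ∈ range N, c i := by
    rw [div_le_iff₀' haN, mul_sum]
    exact sum_le_sum fun i hi => mul_le_mul_of_nonneg_right
      (sq_le_sq_of_monotone ha_pos ha_mono (mem_range.1 hi).le) (hc i)
  have hsplit : Q ^ 2 / a N ^ 2 = (∑ j ∈ range N, a j ^ 2 * c j) / a N ^ 2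
      + (Q ^ 2 - ∑ j ∈ range N, a j ^ 2 * c j) / a N ^ 2 := by
    rw [← add_div, add_sub_cancel]
  linarith

end WaterFill

theorem best_truncation_le_twice_sup_J_general
    (a : ℕ → ℝ) (ha_pos : ∀ j, 0 < a j) (ha_mono : Monotone a)
    (s : ℕ → ℝ) (hs_pos : ∀ j, 0 < s j)
    (hs_zero : Tendsto s atTop (nhds 0))
    (Q : ℝ) (σ : ℝ) (hσ : 0 < σ) :
    (⨅ P : Finset ℕ,
      sSup {t : ℝ | ∃ r : ℕ → ℝ,
        ((∀ j, 0 ≤ r j) ∧ (Summable fun j => (a j) ^ 2 * r j) ∧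
          (∑' j, (a j) ^ 2 * r j) ≤ Q ^ 2) ∧
        t = (∑' i, (if i ∈ P then (0 : ℝ) else r i))
              + σ ^ 2 * ∑ i ∈ P, 1 / (s i) ^ 2})
    ≤ 2 * sSup {t : ℝ | ∃ r : ℕ → ℝ,
        ((∀ j, 0 ≤ r j) ∧ (Summable fun j => (a j) ^ 2 * r j) ∧
          (∑' j, (a j) ^ 2 * r j) ≤ Q ^ 2) ∧
        t = ∑' j, min (r j) (σ ^ 2 / (s j) ^ 2)} := by
  set c : ℕ → ℝ := fun j => σ ^ 2 / s j ^ 2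
  have hc : ∀ j, 0 ≤ c j := fun j => by positivity
  obtain ⟨n, hn⟩ := exists_lt_sum_range ha_pos ha_mono hc
    (tendsto_const_div_sq_atTop hs_pos hs_zero (pow_pos hσ 2)) (Q ^ 2)
  obtain ⟨N, hTN, hTN1⟩ :=
    exists_le_lt_succ (T := fun n => ∑ j ∈ range n, a j ^ 2 * c j) hn (by simpa using sq_nonneg Q)
  have hbdd : BddBelow (Set.range fun P : Finset ℕ => sSup {t | ∃ r ∈ posEllipsoid a Q,
      t = ∑' i, (if i ∈ P then 0 else r i) + σ ^ 2 * ∑ i ∈ P, 1 / s i ^ 2}) :=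
    ⟨0, Set.forall_mem_range.2 fun P => sSup_truncationRisk_nonneg P (by positivity)⟩
  refine (ciInf_le hbdd (range N)).trans ?_
  calc _ ≤ Q ^ 2 / a N ^ 2 + σ ^ 2 * ∑ i ∈ range N, 1 / s i ^ 2 :=
        sSup_truncationRisk_range_le ha_pos ha_mono N _
    _ = Q ^ 2 / a N ^ 2 + ∑ i ∈ range N, c i := by simp only [mul_sum, mul_one_div, c]
    _ ≤ 2 * ∑' i, min (waterFill a c Q N i) (c i) :=
        sq_div_add_sum_le_two_mul_tsum_min_waterFill ha_pos ha_mono hc hTN hTN1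
    _ ≤ _ := mul_le_mul_of_nonneg_left (le_sSup_tsum_min ha_pos ha_mono hc
          (waterFill_mem_posEllipsoid hc (ha_pos N).ne' hTN)) two_pos.le

/-- the best truncation-estimator squared risk over the ellipsoid is
at most twice the supremum of `J` over the squared positive ellipsoid:
`inf_P sup_{r ∈ Θ₊²(a,Q)} ( ∑_{i ∉ P} r_i + σ² ∑_{i ∈ P} σ_i² ) ≤ 2 sup_{r ∈ Θ₊²(a,Q)} J(r)`. -/
theorem best_truncation_le_twice_sup_J
    (a : ℕ → ℝ) (ha_pos : ∀ j, 0 < a j) (ha_mono : Monotone a)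
    (ha_top : Tendsto a atTop atTop)
    (s : ℕ → ℝ) (hs_pos : ∀ j, 0 < s j)
    (hs_zero : Tendsto s atTop (nhds 0))
    (Q : ℝ) (hQ : 0 < Q) (σ : ℝ) (hσ : 0 < σ) :
    (⨅ P : Finset ℕ,
      sSup {t : ℝ | ∃ r : ℕ → ℝ,
        ((∀ j, 0 ≤ r j) ∧ (Summable fun j => (a j) ^ 2 * r j) ∧
          (∑' j, (a j) ^ 2 * r j) ≤ Q ^ 2) ∧
        t = (∑' i, (if i ∈ P then (0 : ℝ) else r i))
              + σ ^ 2 * ∑ i ∈ P, 1 / (s i) ^ 2})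
    ≤ 2 * sSup {t : ℝ | ∃ r : ℕ → ℝ,
        ((∀ j, 0 ≤ r j) ∧ (Summable fun j => (a j) ^ 2 * r j) ∧
          (∑' j, (a j) ^ 2 * r j) ≤ Q ^ 2) ∧
        t = ∑' j, min (r j) (σ ^ 2 / (s j) ^ 2)} :=
  best_truncation_le_twice_sup_J_general a ha_pos ha_mono s hs_pos hs_zero Q σ hσ
end

section
/- Let p > 0, κ > 0 and Q > 0, and set a_j = e^{κj} and s_j = e^{−pj} for j ≥ 1. Then there exist constants 0 < c ≤ C and σ₀ > 0 such that for all σ ∈ (0, σ₀): c · σ^{2κ/(p + κ)} ≤ inf_{D ≥ 0} ( Q² e^{−2κ(D+1)} + σ² ∑_{j=1}^D e^{2pj} ) ≤ C · σ^{2κ/(p + κ)}. -/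
/-!
Put `t = -log σ / (p + κ)`, so that the bias `e^{-2κt}` and the variance `σ² e^{2pt}` at the
level `t` both equal `σ^{2κ/(p+κ)}`. The variance sum is geometric, hence comparable to its
last term `e^{2pD}`. Every truncation level `D` either stays below `t`, paying the bias
`e^{-2κ(D+1)} ≥ e^{-2κ} e^{-2κt}`, or exceeds `t`, paying the variance `σ² e^{2pD} ≥ σ² e^{2pt}`;
the level `D = ⌈t⌉` pays at most a constant multiple of both.
-/

open Real Finset

noncomputable def truncationRisk (p κ Q σ : ℝ) (D : ℕ) : ℝ :=
  Q ^ 2 * exp (-(2 * κ) * ((D : ℝ) + 1)) + σ ^ 2 * ∑ j ∈ range D, exp (2 * p * ((j : ℝ) + 1))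

lemma exp_le_sum_range_exp (a : ℝ) {D : ℕ} (hD : 0 < D) :
    exp (a * D) ≤ ∑ j ∈ range D, exp (a * ((j : ℝ) + 1)) := by
  obtain ⟨n, rfl⟩ := Nat.exists_eq_succ_of_ne_zero hD.ne'
  rw [sum_range_succ, Nat.cast_succ]
  exact le_add_of_nonneg_left (sum_nonneg fun _ _ => (exp_pos _).le)

lemma sum_range_exp_le {a : ℝ} (ha : 0 < a) (D : ℕ) :
    ∑ j ∈ range D, exp (a * ((j : ℝ) + 1)) ≤ exp (a * ((D : ℝ) + 1)) / (exp a - 1) := by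
  have hden : 0 < exp a - 1 := sub_pos.mpr (one_lt_exp_iff.mpr ha)
  induction D with
  | zero => simpa using div_nonneg (exp_pos a).le hden.le
  | succ D ih =>
    rw [sum_range_succ]
    have hstep : exp (a * ((D : ℝ) + 1)) / (exp a - 1) + exp (a * ((D : ℝ) + 1))
        = exp (a * (((D + 1 : ℕ) : ℝ) + 1)) / (exp a - 1) := by
      field_simp
      rw [show a * (((D + 1 : ℕ) : ℝ) + 1) = a * ((D : ℝ) + 1) + a by push_cast; ring, exp_add]
      ring
    linarith

lemma truncationRisk_nonneg (p κ Q σ : ℝ) (D : ℕ) : 0 ≤ truncationRisk p κ Q σ D := by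
  unfold truncationRisk
  positivity

lemma min_le_truncationRisk {p κ t : ℝ} (hp : 0 ≤ p) (hκ : 0 ≤ κ) (ht : 0 ≤ t) (Q σ : ℝ)
    (D : ℕ) :
    min (Q ^ 2 * exp (-(2 * κ)) * exp (-(2 * κ) * t)) (σ ^ 2 * exp (2 * p * t))
      ≤ truncationRisk p κ Q σ D := by
  have hbias : 0 ≤ Q ^ 2 * exp (-(2 * κ) * ((D : ℝ) + 1)) := by positivity
  have hvar : 0 ≤ σ ^ 2 * ∑ j ∈ range D, exp (2 * p * ((j : ℝ) + 1)) :=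
    mul_nonneg (sq_nonneg σ) (sum_nonneg fun _ _ => (exp_pos _).le)
  unfold truncationRisk
  rcases le_or_gt (D : ℝ) t with hDt | htD
  · have hexp : exp (-(2 * κ)) * exp (-(2 * κ) * t) ≤ exp (-(2 * κ) * ((D : ℝ) + 1)) := by
      rw [← exp_add]
      exact exp_le_exp.mpr (by nlinarith)
    calc _ ≤ Q ^ 2 * exp (-(2 * κ)) * exp (-(2 * κ) * t) := min_le_left _ _
      _ ≤ Q ^ 2 * exp (-(2 * κ) * ((D : ℝ) + 1)) := by
        rw [mul_assoc]; exact mul_le_mul_of_nonneg_left hexp (sq_nonneg Q)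
      _ ≤ _ := le_add_of_nonneg_right hvar
  · have hD : 0 < D := by exact_mod_cast ht.trans_lt htD
    have hsum : exp (2 * p * t) ≤ ∑ j ∈ range D, exp (2 * p * ((j : ℝ) + 1)) :=
      (exp_le_exp.mpr (by nlinarith)).trans (exp_le_sum_range_exp (2 * p) hD)
    calc _ ≤ σ ^ 2 * exp (2 * p * t) := min_le_right _ _
      _ ≤ σ ^ 2 * ∑ j ∈ range D, exp (2 * p * ((j : ℝ) + 1)) :=
        mul_le_mul_of_nonneg_left hsum (sq_nonneg σ)
      _ ≤ _ := le_add_of_nonneg_left hbias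

lemma truncationRisk_ceil_le {p κ t : ℝ} (hp : 0 < p) (hκ : 0 ≤ κ) (ht : 0 ≤ t) (Q σ : ℝ) :
    truncationRisk p κ Q σ ⌈t⌉₊
      ≤ Q ^ 2 * exp (-(2 * κ) * t)
        + exp (4 * p) / (exp (2 * p) - 1) * (σ ^ 2 * exp (2 * p * t)) := by
  have hDt : t ≤ ⌈t⌉₊ := Nat.le_ceil t
  have hDt' : (⌈t⌉₊ : ℝ) < t + 1 := Nat.ceil_lt_add_one ht
  have hden : 0 < exp (2 * p) - 1 := sub_pos.mpr (one_lt_exp_iff.mpr (by linarith))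
  have hbias : exp (-(2 * κ) * ((⌈t⌉₊ : ℝ) + 1)) ≤ exp (-(2 * κ) * t) :=
    exp_le_exp.mpr (by nlinarith)
  have hlast : exp (2 * p * ((⌈t⌉₊ : ℝ) + 1)) ≤ exp (4 * p) * exp (2 * p * t) := by
    rw [← exp_add]; exact exp_le_exp.mpr (by nlinarith)
  have hsum : ∑ j ∈ range ⌈t⌉₊, exp (2 * p * ((j : ℝ) + 1))
      ≤ exp (4 * p) / (exp (2 * p) - 1) * exp (2 * p * t) := by
    calc _ ≤ exp (2 * p * ((⌈t⌉₊ : ℝ) + 1)) / (exp (2 * p) - 1) :=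
          sum_range_exp_le (by linarith) _
      _ ≤ exp (4 * p) * exp (2 * p * t) / (exp (2 * p) - 1) := by gcongr
      _ = _ := by ring
  unfold truncationRisk
  calc _ ≤ Q ^ 2 * exp (-(2 * κ) * t)
        + σ ^ 2 * (exp (4 * p) / (exp (2 * p) - 1) * exp (2 * p * t)) := by gcongr
    _ = _ := by ring

lemma rpow_eq_exp_neg_log_div {σ : ℝ} (hσ : 0 < σ) {p κ : ℝ} (hpκ : p + κ ≠ 0) :
    σ ^ (2 * κ / (p + κ)) = exp (-(2 * κ) * (-log σ / (p + κ))) := by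
  rw [rpow_def_of_pos hσ]
  congr 1
  field_simp

lemma sq_mul_exp_neg_log_div {σ : ℝ} (hσ : 0 < σ) {p κ : ℝ} (hpκ : p + κ ≠ 0) :
    σ ^ 2 * exp (2 * p * (-log σ / (p + κ))) = σ ^ (2 * κ / (p + κ)) := by
  rw [rpow_eq_exp_neg_log_div hσ hpκ, ← exp_log hσ, ← exp_nat_mul, ← exp_add, log_exp]
  congr 1
  field_simp
  push_cast
  ring

/-- for analytic smoothness `a_j = e^{κj}` and a severely ill-posed
operator `s_j = e^{−pj}`, the best truncated-series squared risk behaves like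
`σ^{2κ/(p+κ)}` as `σ → 0`, up to constants. -/
theorem rate_analytic_severe
    (p κ Q : ℝ) (hp : 0 < p) (hκ : 0 < κ) (hQ : 0 < Q) :
    ∃ c C σ₀ : ℝ, 0 < c ∧ c ≤ C ∧ 0 < σ₀ ∧
      ∀ σ : ℝ, 0 < σ → σ < σ₀ →
        c * σ ^ (2 * κ / (p + κ))
          ≤ (⨅ D : ℕ, (Q ^ 2 * Real.exp (-(2 * κ) * ((D : ℝ) + 1))
              + σ ^ 2 * ∑ j ∈ Finset.range D, Real.exp (2 * p * ((j : ℝ) + 1)))) ∧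
        (⨅ D : ℕ, (Q ^ 2 * Real.exp (-(2 * κ) * ((D : ℝ) + 1))
              + σ ^ 2 * ∑ j ∈ Finset.range D, Real.exp (2 * p * ((j : ℝ) + 1))))
          ≤ C * σ ^ (2 * κ / (p + κ)) := by
  have hpκ : 0 < p + κ := by linarith
  have hc : min (Q ^ 2 * exp (-(2 * κ))) 1 ≤ Q ^ 2 :=
    (min_le_left _ _).trans
      (mul_le_of_le_one_right (sq_nonneg Q) (exp_le_one_iff.mpr (by linarith)))
  have hratio : 0 ≤ exp (4 * p) / (exp (2 * p) - 1) :=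
    div_nonneg (exp_pos _).le (sub_pos.mpr (one_lt_exp_iff.mpr (by linarith))).le
  refine ⟨min (Q ^ 2 * exp (-(2 * κ))) 1, Q ^ 2 + exp (4 * p) / (exp (2 * p) - 1), 1,
    lt_min (by positivity) one_pos, by linarith, one_pos, fun σ hσ hσ1 => ?_⟩
  have ht : 0 ≤ -log σ / (p + κ) := div_nonneg (by linarith [log_neg hσ hσ1]) hpκ.le
  have hbias := rpow_eq_exp_neg_log_div hσ hpκ.ne'
  have hvar := sq_mul_exp_neg_log_div hσ hpκ.ne'
  constructor
  · refine le_ciInf fun D => le_trans ?_ (min_le_truncationRisk hp.le hκ.le ht Q σ D)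
    rw [← hbias, hvar, min_mul_of_nonneg _ _ (rpow_nonneg hσ.le _), one_mul, mul_assoc]
  · refine (ciInf_le ⟨0, ?_⟩ _).trans ((truncationRisk_ceil_le hp hκ.le ht Q σ).trans_eq ?_)
    · rintro _ ⟨D, rfl⟩; exact truncationRisk_nonneg p κ Q σ D
    · rw [← hbias, hvar]; ring
end
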